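/- Let m be a positive integer. Let U : ℝᵐ → ℝ be continuously differentiable and φ : ℝᵐ × ℝᵐ → ℝᵐ be continuously differentiable. Fix (q, η) ∈ ℝᵐ × ℝᵐ, let A = ∂φ/∂q(q,η) and B = ∂φ/∂η(q,η), assume A and B are invertible, let T, D be real m×m matrices and G an invertible real m×m matrix, write g = ∇U(φ(q,η)), and define Λ = A T Bᵀ + B Tᵀ Aᵀ and the feedback u = -G⁻¹ B⁻¹ Λ g + G⁻¹ (D - B⁻¹ A T) η. Then: (i) -D η + G u = -Tᵀ Aᵀ g - B⁻¹ A T (η + Bᵀ g), i.e. the η-dynamics becomes η̇ = -Tᵀ ∇_q H_smc - B⁻¹ A T ∇_η H_smc with H_smc(q,η) = (1/2)‖η‖² + U(φ(q,η)); and (ii) A(Tη) + B(-Tᵀ Aᵀ g - B⁻¹ A T (η + Bᵀ g)) = -Λ g, i.e. along the closed loop the sliding variable σ = φ(q,η) satisfies σ̇ = -Λ ∇U(σ). -/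
import Mathlib


open Matrix

/-- The continuous linear map on Euclidean space induced by a square real matrix. -/
noncomputable def mCLM {m : ℕ} (A : Matrix (Fin m) (Fin m) ℝ) :
    EuclideanSpace ℝ (Fin m) →L[ℝ] EuclideanSpace ℝ (Fin m) :=
  Matrix.toEuclideanCLM (𝕜 := ℝ) A

lemma mCLM_mul_apply {m : ℕ} (M N : Matrix (Fin m) (Fin m) ℝ) (v : EuclideanSpace ℝ (Fin m)) :
    mCLM (M * N) v = mCLM M (mCLM N v) := by
  rw [mCLM, mCLM, mCLM, _root_.map_mul]; rfl

lemma mCLM_add_apply {m : ℕ} (M N : Matrix (Fin m) (Fin m) ℝ) (v : EuclideanSpace ℝ (Fin m)) :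
    mCLM (M + N) v = mCLM M v + mCLM N v := by
  simp only [mCLM, map_add]; rfl

lemma mCLM_sub_apply {m : ℕ} (M N : Matrix (Fin m) (Fin m) ℝ) (v : EuclideanSpace ℝ (Fin m)) :
    mCLM (M - N) v = mCLM M v - mCLM N v := by
  simp only [mCLM, map_sub]; rfl

lemma mCLM_one_apply {m : ℕ} (v : EuclideanSpace ℝ (Fin m)) :
    mCLM (1 : Matrix (Fin m) (Fin m) ℝ) v = v := by
  rw [mCLM, _root_.map_one]; rfl

lemma mCLM_inv_cancel {m : ℕ} {M : Matrix (Fin m) (Fin m) ℝ} (h : IsUnit M.det)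
    (v : EuclideanSpace ℝ (Fin m)) : mCLM M⁻¹ (mCLM M v) = v := by
  rw [← mCLM_mul_apply, Matrix.nonsing_inv_mul _ h, mCLM_one_apply]

lemma mCLM_cancel_inv {m : ℕ} {M : Matrix (Fin m) (Fin m) ℝ} (h : IsUnit M.det)
    (v : EuclideanSpace ℝ (Fin m)) : mCLM M (mCLM M⁻¹ v) = v := by
  rw [← mCLM_mul_apply, Matrix.mul_nonsing_inv _ h, mCLM_one_apply]

/-- (First, algebraic part of Theorem 1 of the paper.) With
A = ∂φ/∂q, B = ∂φ/∂η invertible Jacobians, g = ∇U(φ(q,η)), Λ = ATBᵀ + BTᵀAᵀ and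
feedback u = -G⁻¹B⁻¹Λg + G⁻¹(D - B⁻¹AT)η: (i) -Dη + Gu = -TᵀAᵀg - B⁻¹AT(η + Bᵀg),
so η̇ = -Tᵀ∇_qH_smc - B⁻¹AT∇_ηH_smc; (ii) A(Tη) + B(-TᵀAᵀg - B⁻¹AT(η + Bᵀg)) = -Λg,
so the sliding variable σ = φ(q,η) satisfies σ̇ = -Λ∇U(σ). -/
theorem stmt_11 (m : ℕ) (hm : 0 < m)
    (U : EuclideanSpace ℝ (Fin m) → ℝ) (hUsmooth : ContDiff ℝ 1 U)
    (φ : EuclideanSpace ℝ (Fin m) × EuclideanSpace ℝ (Fin m) → EuclideanSpace ℝ (Fin m))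
    (hφsmooth : ContDiff ℝ 1 φ)
    (q η : EuclideanSpace ℝ (Fin m))
    (A B T D G : Matrix (Fin m) (Fin m) ℝ)
    (hA : IsUnit A.det) (hB : IsUnit B.det) (hG : IsUnit G.det)
    (g : EuclideanSpace ℝ (Fin m))
    (hg : HasGradientAt U g (φ (q, η)))
    (hAder : HasFDerivAt (fun q' => φ (q', η)) (mCLM A) q)
    (hBder : HasFDerivAt (fun η' => φ (q, η')) (mCLM B) η) :
    let Λ : Matrix (Fin m) (Fin m) ℝ := A * T * Bᵀ + B * Tᵀ * Aᵀ
    let u : EuclideanSpace ℝ (Fin m) :=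
      -(mCLM (G⁻¹ * B⁻¹ * (A * T * Bᵀ + B * Tᵀ * Aᵀ)) g) +
        mCLM (G⁻¹ * (D - B⁻¹ * A * T)) η
    (-(mCLM D η) + mCLM G u =
      -(mCLM Tᵀ (mCLM Aᵀ g)) - mCLM (B⁻¹ * A * T) (η + mCLM Bᵀ g)) ∧
    (mCLM A (mCLM T η) +
        mCLM B (-(mCLM Tᵀ (mCLM Aᵀ g)) - mCLM (B⁻¹ * A * T) (η + mCLM Bᵀ g)) =
      -(mCLM Λ g)) := by
  intro Λ u
  constructor <;>
  · simp only [u, Λ, mCLM_mul_apply, mCLM_add_apply, mCLM_sub_apply, map_add, map_neg,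
      map_sub, mCLM_cancel_inv hG, mCLM_cancel_inv hB, mCLM_inv_cancel hB]
    abel
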